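/- arXiv:math/0408369 — 2 statements merged into one kernel-verified Lean document; each statement's English description precedes it below -/
import Mathlib

section
/- For 0 < |p| < 1 and 0 < |q| < 1, the function z ↦ Γ(z;q,p) = ∏_{j,k≥0}(1 − z⁻¹q^{j+1}p^{k+1})/(1 − zq^jp^k) has a simple pole at z = 1, with residue-type behavior: lim_{z→1} (1 − z) Γ(z;q,p) = 1/((q;q)_∞ (p;p)_∞). -/
open Complex Filter Topology

noncomputable def qPochInf (a p : ℂ) : ℂ := ∏' j : ℕ, (1 - a * p ^ j)

noncomputable def ellGamma (z q p : ℂ) : ℂ :=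
  ∏' jk : ℕ × ℕ, (1 - z⁻¹ * q ^ (jk.1 + 1) * p ^ (jk.2 + 1)) / (1 - z * q ^ jk.1 * p ^ jk.2)

/-!
Splitting off the factor `1 - z` of index `(0, 0)` from the denominator gives
`(1 - z) Γ(z; q, p) = N(z) / D(z)` with `N(z) = ∏ (1 - z⁻¹ q^(j+1) p^(k+1))` and
`D(z) = ∏_{(j,k) ≠ (0,0)} (1 - z q^j p^k)`. Both products are dominated by `∑ |q|^j |p|^k`
uniformly near `z = 1`, so Tannery's theorem makes them continuous there, and `D(1) ≠ 0` since
no factor vanishes. At `z = 1` the index set of `D` splits into the two axes and the open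
quadrant, which gives `D(1) = (q;q)_∞ (p;p)_∞ N(1)`.
-/

open Function Set

theorem Multipliable.hasProd_mulIndicator_range {M γ β : Type*} [CommMonoid M]
    [TopologicalSpace M] {f : β → M} {g : γ → β} (hg : Injective g) (hf : Multipliable (f ∘ g)) :
    HasProd ((range g).mulIndicator f) (∏' x, f (g x)) :=
  hasProd_subtype_iff_mulIndicator.1 (hg.hasProd_range_iff.2 hf.hasProd)

theorem tprod_nat_prod_eq_mul {M : Type*} [CommMonoid M] [TopologicalSpace M] [ContinuousMul M]
    [T2Space M] {f : ℕ × ℕ → M}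
    (h₁ : Multipliable fun j : ℕ => f (j + 1, 0)) (h₂ : Multipliable fun k : ℕ => f (0, k + 1))
    (h₃ : Multipliable fun jk : ℕ × ℕ => f (jk.1 + 1, jk.2 + 1)) :
    ∏' jk, f jk = f 0 * (∏' j : ℕ, f (j + 1, 0)) * (∏' k : ℕ, f (0, k + 1)) *
      ∏' jk : ℕ × ℕ, f (jk.1 + 1, jk.2 + 1) := by
  have hprod := (((hasProd_ite_eq (0 : ℕ × ℕ) (f 0)).mul
    (Multipliable.hasProd_mulIndicator_range (g := fun j : ℕ => (j + 1, 0))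
      (fun _ _ h => by simpa using h) h₁)).mul
    (Multipliable.hasProd_mulIndicator_range (g := fun k : ℕ => (0, k + 1))
      (fun _ _ h => by simpa using h) h₂)).mul
    (Multipliable.hasProd_mulIndicator_range (g := fun jk : ℕ × ℕ => (jk.1 + 1, jk.2 + 1))
      (fun _ _ h => by simpa [Prod.ext_iff] using h) h₃)
  refine (hprod.congr_fun fun jk => ?_).tprod_eq
  rcases jk with ⟨_ | j, _ | k⟩ <;> simp [mulIndicator, Prod.zero_eq_mk]

theorem continuousAt_tprod_one_sub_mul {X R ι : Type*} [TopologicalSpace X] [NormedCommRing R]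
    [NormOneClass R] [CompleteSpace R] {c : X → R} {x₀ : X} (hc : ContinuousAt c x₀) {a : ι → R}
    (ha : Summable fun i => ‖a i‖) :
    ContinuousAt (fun x => ∏' i, (1 - c x * a i)) x₀ := by
  have hbound : ∀ᶠ x in 𝓝 x₀, ∀ i, ‖-(c x * a i)‖ ≤ (‖c x₀‖ + 1) * ‖a i‖ := by
    filter_upwards [hc.norm.eventually (gt_mem_nhds (lt_add_one ‖c x₀‖))] with x hx i
    rw [norm_neg]
    exact (norm_mul_le _ _).trans (mul_le_mul_of_nonneg_right hx.le (norm_nonneg _))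
  simpa [ContinuousAt, sub_eq_add_neg] using
    tendsto_tprod_one_add_of_dominated_convergence (ha.mul_left _)
      (fun i => (hc.tendsto.mul_const (a i)).neg) hbound

theorem Complex.multipliable_one_sub_of_summable {ι : Type*} {u : ι → ℂ} (hu : Summable u) :
    Multipliable fun i => 1 - u i := by
  simpa [sub_eq_add_neg] using Complex.multipliable_one_add_of_summable hu.neg

theorem Complex.tprod_one_sub_ne_zero {ι : Type*} {u : ι → ℂ} (hu : Summable u)
    (h : ∀ i, u i ≠ 1) : ∏' i, (1 - u i) ≠ 0 := by
  have hlog : Summable fun i => log (1 - u i) := by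
    simpa [sub_eq_add_neg] using Complex.summable_log_one_add_of_summable hu.neg
  rw [← cexp_tsum_eq_tprod (fun i => sub_ne_zero.2 (h i).symm) hlog]
  exact exp_ne_zero _

noncomputable def offOriginMonomial (q p : ℂ) (jk : ℕ × ℕ) : ℂ :=
  if jk = 0 then 0 else q ^ jk.1 * p ^ jk.2

noncomputable def ellGammaNum (z q p : ℂ) : ℂ :=
  ∏' jk : ℕ × ℕ, (1 - z⁻¹ * q ^ (jk.1 + 1) * p ^ (jk.2 + 1))

noncomputable def ellGammaDenReg (z q p : ℂ) : ℂ :=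
  ∏' jk : ℕ × ℕ, (1 - z * offOriginMonomial q p jk)

section

variable {q p : ℂ}

theorem summable_norm_pow_mul_pow (hq : ‖q‖ < 1) (hp : ‖p‖ < 1) :
    Summable fun jk : ℕ × ℕ => ‖q ^ jk.1 * p ^ jk.2‖ :=
  Summable.mul_norm (summable_norm_geometric_of_norm_lt_one hq)
    (summable_norm_geometric_of_norm_lt_one hp)

theorem summable_norm_pow_succ_mul_pow_succ (hq : ‖q‖ < 1) (hp : ‖p‖ < 1) :
    Summable fun jk : ℕ × ℕ => ‖q ^ (jk.1 + 1) * p ^ (jk.2 + 1)‖ :=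
  (summable_norm_pow_mul_pow hq hp).comp_injective (i := fun jk : ℕ × ℕ => (jk.1 + 1, jk.2 + 1))
    fun _ _ h => by simpa [Prod.ext_iff] using h

theorem summable_norm_offOriginMonomial (hq : ‖q‖ < 1) (hp : ‖p‖ < 1) :
    Summable fun jk => ‖offOriginMonomial q p jk‖ :=
  (summable_norm_pow_mul_pow hq hp).of_nonneg_of_le (fun _ => norm_nonneg _) fun jk => by
    unfold offOriginMonomial; split_ifs <;> simp; positivity

theorem norm_offOriginMonomial_le_max (hq : ‖q‖ ≤ 1) (hp : ‖p‖ ≤ 1) (jk : ℕ × ℕ) :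
    ‖offOriginMonomial q p jk‖ ≤ max ‖q‖ ‖p‖ := by
  unfold offOriginMonomial
  split_ifs with h
  · simp
  · have hjk : jk.1 + jk.2 ≠ 0 := fun h' => h (Prod.ext (by simp; omega) (by simp; omega))
    calc ‖q ^ jk.1 * p ^ jk.2‖ = ‖q‖ ^ jk.1 * ‖p‖ ^ jk.2 := by rw [norm_mul, norm_pow, norm_pow]
      _ ≤ max ‖q‖ ‖p‖ ^ jk.1 * max ‖q‖ ‖p‖ ^ jk.2 := by gcongr <;> simp
      _ = max ‖q‖ ‖p‖ ^ (jk.1 + jk.2) := (pow_add _ _ _).symm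
      _ ≤ max ‖q‖ ‖p‖ := pow_le_of_le_one (by positivity) (max_le hq hp) hjk

theorem ellGammaDenReg_ne_zero (hq : ‖q‖ < 1) (hp : ‖p‖ < 1) {z : ℂ}
    (hz : ‖z‖ * max ‖q‖ ‖p‖ < 1) : ellGammaDenReg z q p ≠ 0 := by
  refine Complex.tprod_one_sub_ne_zero
    ((summable_norm_offOriginMonomial hq hp).of_norm.mul_left z) fun jk h => ?_
  have := (norm_mul_le z (offOriginMonomial q p jk)).trans
    (mul_le_mul_of_nonneg_left (norm_offOriginMonomial_le_max hq.le hp.le jk) (norm_nonneg z))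
  rw [h, norm_one] at this
  linarith

theorem hasProd_one_sub_mul_pow_mul_pow (hq : ‖q‖ < 1) (hp : ‖p‖ < 1) (z : ℂ) :
    HasProd (fun jk : ℕ × ℕ => 1 - z * q ^ jk.1 * p ^ jk.2) ((1 - z) * ellGammaDenReg z q p) := by
  have hreg := (Complex.multipliable_one_sub_of_summable
    ((summable_norm_offOriginMonomial hq hp).of_norm.mul_left z)).hasProd
  refine ((hasProd_ite_eq (0 : ℕ × ℕ) (1 - z)).mul hreg).congr_fun fun jk => ?_
  by_cases h : jk = 0
  · simp [h, offOriginMonomial]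
  · simp [h, offOriginMonomial, mul_assoc]

theorem one_sub_mul_ellGamma (hq : ‖q‖ < 1) (hp : ‖p‖ < 1) {z : ℂ} (hz1 : z ≠ 1)
    (hz : ‖z‖ * max ‖q‖ ‖p‖ < 1) :
    (1 - z) * ellGamma z q p = ellGammaNum z q p / ellGammaDenReg z q p := by
  have hz1' : 1 - z ≠ 0 := sub_ne_zero.2 hz1.symm
  have hnum : HasProd (fun jk : ℕ × ℕ => 1 - z⁻¹ * q ^ (jk.1 + 1) * p ^ (jk.2 + 1))
      (ellGammaNum z q p) := by
    rw [ellGammaNum]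
    simp_rw [mul_assoc]
    exact (Complex.multipliable_one_sub_of_summable
      ((summable_norm_pow_succ_mul_pow_succ hq hp).of_norm.mul_left z⁻¹)).hasProd
  rw [ellGamma, (hnum.div₀ (hasProd_one_sub_mul_pow_mul_pow hq hp z)
    (mul_ne_zero hz1' (ellGammaDenReg_ne_zero hq hp hz))).tprod_eq, mul_div_assoc',
    mul_div_mul_left _ _ hz1']

theorem ellGammaDenReg_one (hq : ‖q‖ < 1) (hp : ‖p‖ < 1) :
    ellGammaDenReg 1 q p = qPochInf q q * qPochInf p p * ellGammaNum 1 q p := by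
  have hm := (summable_norm_offOriginMonomial hq hp).of_norm
  have hmul {γ : Type} (g : γ → ℕ × ℕ) (hg : Injective g) :
      Multipliable fun x => 1 - 1 * offOriginMonomial q p (g x) :=
    Complex.multipliable_one_sub_of_summable ((hm.comp_injective hg).mul_left 1)
  rw [ellGammaDenReg, tprod_nat_prod_eq_mul (f := fun jk => 1 - 1 * offOriginMonomial q p jk)
    (hmul (fun j : ℕ => (j + 1, 0)) fun _ _ h => by simpa using h)
    (hmul (fun k : ℕ => (0, k + 1)) fun _ _ h => by simpa using h)
    (hmul (fun jk : ℕ × ℕ => (jk.1 + 1, jk.2 + 1)) fun _ _ h => by simpa [Prod.ext_iff] using h)]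
  simp [offOriginMonomial, qPochInf, ellGammaNum, pow_succ']

theorem continuousAt_ellGammaNum (hq : ‖q‖ < 1) (hp : ‖p‖ < 1) :
    ContinuousAt (fun z => ellGammaNum z q p) 1 := by
  simp_rw [ellGammaNum, mul_assoc]
  exact continuousAt_tprod_one_sub_mul (continuousAt_inv₀ one_ne_zero)
    (summable_norm_pow_succ_mul_pow_succ hq hp)

theorem continuousAt_ellGammaDenReg (hq : ‖q‖ < 1) (hp : ‖p‖ < 1) :
    ContinuousAt (fun z => ellGammaDenReg z q p) 1 :=
  continuousAt_tprod_one_sub_mul continuousAt_id (summable_norm_offOriginMonomial hq hp)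

end

theorem ellGamma_residue_at_one_general (q p : ℂ)
    (hq1 : ‖q‖ < 1)
    (hp1 : ‖p‖ < 1) :
    Tendsto (fun z : ℂ => (1 - z) * ellGamma z q p) (𝓝[≠] (1 : ℂ))
      (𝓝 (1 / (qPochInf q q * qPochInf p p))) := by
  have hr : max ‖q‖ ‖p‖ < 1 := max_lt hq1 hp1
  have hD1 := ellGammaDenReg_ne_zero hq1 hp1 (z := 1) (by simpa using hr)
  have hvalue : ellGammaNum 1 q p / ellGammaDenReg 1 q p = 1 / (qPochInf q q * qPochInf p p) := by
    rw [ellGammaDenReg_one hq1 hp1] at hD1 ⊢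
    rw [div_mul_cancel_right₀ (right_ne_zero_of_mul hD1), one_div]
  have hnear : ∀ᶠ z in 𝓝 (1 : ℂ), ‖z‖ * max ‖q‖ ‖p‖ < 1 :=
    (continuous_norm.mul continuous_const).continuousAt.eventually_lt continuousAt_const
      (by simpa using hr)
  rw [← hvalue]
  refine (((continuousAt_ellGammaNum hq1 hp1).div (continuousAt_ellGammaDenReg hq1 hp1)
    hD1).tendsto.mono_left nhdsWithin_le_nhds).congr' ?_
  filter_upwards [nhdsWithin_le_nhds hnear, self_mem_nhdsWithin] with z hz hz1
  exact (one_sub_mul_ellGamma hq1 hp1 hz1 hz).symm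

theorem ellGamma_residue_at_one (q p : ℂ)
    (hq0 : 0 < ‖q‖) (hq1 : ‖q‖ < 1)
    (hp0 : 0 < ‖p‖) (hp1 : ‖p‖ < 1) :
    Tendsto (fun z : ℂ => (1 - z) * ellGamma z q p) (𝓝[≠] (1 : ℂ))
      (𝓝 (1 / (qPochInf q q * qPochInf p p))) :=
  ellGamma_residue_at_one_general q p hq1 hp1
end

section
/- Under the assumptions Im(ω₁/ω₂), Im(ω₃/ω₂), Im(ω₃/ω₁) > 0, the modified elliptic gamma function satisfies the reflection equation G(a;ω) G(b;ω) = 1 whenever a + b = ω₁ + ω₂ + ω₃. -/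
open Complex

/-- The modified elliptic gamma function `G(u;ω)`, with
`q = e^{2πiω₁/ω₂}`, `p = e^{2πiω₃/ω₂}`, `r = e^{2πiω₃/ω₁}`, `q̃ = e^{-2πiω₂/ω₁}`. -/
noncomputable def modG (u ω₁ ω₂ ω₃ : ℂ) : ℂ :=
  ∏' jk : ℕ × ℕ,
    ((1 - Complex.exp (-(2 * Real.pi * Complex.I * u / ω₂)) *
          Complex.exp (2 * Real.pi * Complex.I * ω₁ / ω₂) ^ (jk.1 + 1) *
          Complex.exp (2 * Real.pi * Complex.I * ω₃ / ω₂) ^ (jk.2 + 1)) *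
      (1 - Complex.exp (2 * Real.pi * Complex.I * u / ω₁) *
          Complex.exp (-(2 * Real.pi * Complex.I * ω₂ / ω₁)) ^ (jk.1 + 1) *
          Complex.exp (2 * Real.pi * Complex.I * ω₃ / ω₁) ^ jk.2)) /
    ((1 - Complex.exp (2 * Real.pi * Complex.I * u / ω₂) *
          Complex.exp (2 * Real.pi * Complex.I * ω₁ / ω₂) ^ jk.1 *
          Complex.exp (2 * Real.pi * Complex.I * ω₃ / ω₂) ^ jk.2) *
      (1 - Complex.exp (-(2 * Real.pi * Complex.I * u / ω₁)) *
          Complex.exp (-(2 * Real.pi * Complex.I * ω₂ / ω₁)) ^ jk.1 *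
          Complex.exp (2 * Real.pi * Complex.I * ω₃ / ω₁) ^ (jk.2 + 1)))

/-- All numerator and denominator factors of `modG` are nonvanishing at `u`
(`u` avoids the poles and zeros of `G`). -/
def modGRegular (u ω₁ ω₂ ω₃ : ℂ) : Prop :=
  ∀ j k : ℕ,
    (1 - Complex.exp (-(2 * Real.pi * Complex.I * u / ω₂)) *
        Complex.exp (2 * Real.pi * Complex.I * ω₁ / ω₂) ^ (j + 1) *
        Complex.exp (2 * Real.pi * Complex.I * ω₃ / ω₂) ^ (k + 1)) ≠ 0 ∧
    (1 - Complex.exp (2 * Real.pi * Complex.I * u / ω₁) *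
        Complex.exp (-(2 * Real.pi * Complex.I * ω₂ / ω₁)) ^ (j + 1) *
        Complex.exp (2 * Real.pi * Complex.I * ω₃ / ω₁) ^ k) ≠ 0 ∧
    (1 - Complex.exp (2 * Real.pi * Complex.I * u / ω₂) *
        Complex.exp (2 * Real.pi * Complex.I * ω₁ / ω₂) ^ j *
        Complex.exp (2 * Real.pi * Complex.I * ω₃ / ω₂) ^ k) ≠ 0 ∧
    (1 - Complex.exp (-(2 * Real.pi * Complex.I * u / ω₁)) *
        Complex.exp (-(2 * Real.pi * Complex.I * ω₂ / ω₁)) ^ j *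
        Complex.exp (2 * Real.pi * Complex.I * ω₃ / ω₁) ^ (k + 1)) ≠ 0

/-! With `x = e^{2πiu/ω₂}` and `y = e^{2πiu/ω₁}`, the condition `a + b = ω₁ + ω₂ + ω₃` gives
`x_a x_b = q p` and `y_a y_b q̃ = r`. Hence every numerator factor of `G(a)` is a denominator
factor of `G(b)` and vice versa: the factors of `G(b)` are the inverses of those of `G(a)`.
Since `|q|, |p|, |q̃|, |r| < 1`, each of the four families of factors of `G(a)` is `1` minus a
summable double geometric series, so the product converges to a nonzero limit `P`, and
`G(b) = P⁻¹`. -/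

open Real

lemma Complex.exists_hasProd_one_sub_ne_zero {ι : Type*} {g : ι → ℂ} (hg : Summable g)
    (h : ∀ i, 1 - g i ≠ 0) : ∃ P ≠ 0, HasProd (fun i ↦ 1 - g i) P := by
  simp_rw [sub_eq_add_neg] at h ⊢
  exact ⟨_, exp_ne_zero _,
    hasProd_of_hasSum_log h (summable_log_one_add_of_summable hg.neg).hasSum⟩

lemma summable_mul_pow_mul_pow {𝕜 : Type*} [NormedField 𝕜] [CompleteSpace 𝕜] (c : 𝕜) {s t : 𝕜}
    (hs : ‖s‖ < 1) (ht : ‖t‖ < 1) : Summable fun jk : ℕ × ℕ ↦ c * s ^ jk.1 * t ^ jk.2 := by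
  have hst := summable_mul_of_summable_norm (f := (s ^ ·)) (g := (t ^ ·))
    (by simpa [norm_pow] using summable_geometric_of_lt_one (norm_nonneg s) hs)
    (by simpa [norm_pow] using summable_geometric_of_lt_one (norm_nonneg t) ht)
  simpa only [mul_assoc] using hst.mul_left c

lemma norm_exp_two_pi_I_mul_div_lt_one {w v : ℂ} (h : 0 < (w / v).im) :
    ‖cexp (2 * π * I * w / v)‖ < 1 := by
  simpa only [mul_div_assoc] using UpperHalfPlane.norm_exp_two_pi_I_lt_one ⟨w / v, h⟩

lemma norm_exp_neg_two_pi_I_mul_div_lt_one {w v : ℂ} (h : 0 < (w / v).im) :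
    ‖cexp (-(2 * π * I * v / w))‖ < 1 := by
  have him : 0 < (-v / w).im := by
    rw [neg_div, neg_im, ← inv_div, inv_im, neg_div, neg_neg]
    exact div_pos h (normSq_pos.2 fun h0 ↦ by simp [h0] at h)
  simpa only [mul_neg, neg_div, mul_div_assoc] using norm_exp_two_pi_I_mul_div_lt_one him

lemma exp_two_pi_I_mul_div_mul_of_add_eq {a b c d ω : ℂ} (hω : ω ≠ 0) (h : a + b = c + ω + d) :
    cexp (2 * π * I * a / ω) * cexp (2 * π * I * b / ω) =
      cexp (2 * π * I * c / ω) * cexp (2 * π * I * d / ω) := by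
  have harg : 2 * π * I * a / ω + 2 * π * I * b / ω =
      2 * π * I * c / ω + 2 * π * I * d / ω + 2 * π * I := by
    field_simp
    linear_combination h
  rw [← Complex.exp_add, ← Complex.exp_add, harg, Complex.exp_add _ (2 * π * I), exp_two_pi_mul_I,
    mul_one]

/-- The `(j, k)` factor of `G(u;ω)` for `x = e^{2πiu/ω₂}`, `y = e^{2πiu/ω₁}` and `q' = q̃`. -/
noncomputable def ellipticGammaFactor (x y q p q' r : ℂ) (jk : ℕ × ℕ) : ℂ :=
  ((1 - x⁻¹ * q ^ (jk.1 + 1) * p ^ (jk.2 + 1)) * (1 - y * q' ^ (jk.1 + 1) * r ^ jk.2)) /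
    ((1 - x * q ^ jk.1 * p ^ jk.2) * (1 - y⁻¹ * q' ^ jk.1 * r ^ (jk.2 + 1)))

section ellipticGammaFactor

variable {q p q' r : ℂ}

theorem exists_hasProd_ellipticGammaFactor_ne_zero {x y : ℂ} (hq : ‖q‖ < 1) (hp : ‖p‖ < 1)
    (hq' : ‖q'‖ < 1) (hr : ‖r‖ < 1)
    (h : ∀ j k : ℕ, 1 - x⁻¹ * q ^ (j + 1) * p ^ (k + 1) ≠ 0 ∧ 1 - y * q' ^ (j + 1) * r ^ k ≠ 0 ∧
      1 - x * q ^ j * p ^ k ≠ 0 ∧ 1 - y⁻¹ * q' ^ j * r ^ (k + 1) ≠ 0) :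
    ∃ P ≠ 0, HasProd (ellipticGammaFactor x y q p q' r) P := by
  obtain ⟨P₁, hP₁, h₁⟩ := Complex.exists_hasProd_one_sub_ne_zero
    (g := fun jk : ℕ × ℕ ↦ x⁻¹ * q ^ (jk.1 + 1) * p ^ (jk.2 + 1))
    ((summable_mul_pow_mul_pow (x⁻¹ * q * p) hq hp).congr fun _ ↦ by ring)
    fun jk ↦ (h jk.1 jk.2).1
  obtain ⟨P₂, hP₂, h₂⟩ := Complex.exists_hasProd_one_sub_ne_zero
    (g := fun jk : ℕ × ℕ ↦ y * q' ^ (jk.1 + 1) * r ^ jk.2)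
    ((summable_mul_pow_mul_pow (y * q') hq' hr).congr fun _ ↦ by ring)
    fun jk ↦ (h jk.1 jk.2).2.1
  obtain ⟨P₃, hP₃, h₃⟩ := Complex.exists_hasProd_one_sub_ne_zero
    (g := fun jk : ℕ × ℕ ↦ x * q ^ jk.1 * p ^ jk.2)
    (summable_mul_pow_mul_pow x hq hp) fun jk ↦ (h jk.1 jk.2).2.2.1
  obtain ⟨P₄, hP₄, h₄⟩ := Complex.exists_hasProd_one_sub_ne_zero
    (g := fun jk : ℕ × ℕ ↦ y⁻¹ * q' ^ jk.1 * r ^ (jk.2 + 1))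
    ((summable_mul_pow_mul_pow (y⁻¹ * r) hq' hr).congr fun _ ↦ by ring)
    fun jk ↦ (h jk.1 jk.2).2.2.2
  exact ⟨P₁ * P₂ / (P₃ * P₄), by simp [*], (h₁.mul h₂).div₀ (h₃.mul h₄) (mul_ne_zero hP₃ hP₄)⟩

theorem ellipticGammaFactor_reflection {x₁ x₂ y₁ y₂ : ℂ} (hx₁ : x₁ ≠ 0) (hx₂ : x₂ ≠ 0)
    (hy₁ : y₁ ≠ 0) (hy₂ : y₂ ≠ 0) (hx : x₁ * x₂ = q * p) (hy : y₁ * y₂ * q' = r)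
    (jk : ℕ × ℕ) :
    ellipticGammaFactor x₂ y₂ q p q' r jk = (ellipticGammaFactor x₁ y₁ q p q' r jk)⁻¹ := by
  obtain ⟨j, k⟩ := jk
  have e₁ : x₂⁻¹ * q ^ (j + 1) * p ^ (k + 1) = x₁ * q ^ j * p ^ k := by
    field_simp
    linear_combination q ^ j * p ^ k * hx.symm
  have e₂ : y₂ * q' ^ (j + 1) * r ^ k = y₁⁻¹ * q' ^ j * r ^ (k + 1) := by
    field_simp
    linear_combination q' ^ j * r ^ k * hy
  have e₃ : x₁⁻¹ * q ^ (j + 1) * p ^ (k + 1) = x₂ * q ^ j * p ^ k := by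
    field_simp
    linear_combination q ^ j * p ^ k * hx.symm
  have e₄ : y₁ * q' ^ (j + 1) * r ^ k = y₂⁻¹ * q' ^ j * r ^ (k + 1) := by
    field_simp
    linear_combination q' ^ j * r ^ k * hy
  rw [ellipticGammaFactor, ellipticGammaFactor, e₁, e₂, e₃, e₄, inv_div]

end ellipticGammaFactor

lemma modG_eq_tprod (u ω₁ ω₂ ω₃ : ℂ) :
    modG u ω₁ ω₂ ω₃ = ∏' jk, ellipticGammaFactor (cexp (2 * π * I * u / ω₂))
      (cexp (2 * π * I * u / ω₁)) (cexp (2 * π * I * ω₁ / ω₂)) (cexp (2 * π * I * ω₃ / ω₂))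
      (cexp (-(2 * π * I * ω₂ / ω₁))) (cexp (2 * π * I * ω₃ / ω₁)) jk := by
  simp only [modG, ellipticGammaFactor, exp_neg (2 * π * I * u / ω₂),
    exp_neg (2 * π * I * u / ω₁)]

theorem modG_reflection_general (ω₁ ω₂ ω₃ a b : ℂ)
    (h12 : 0 < (ω₁ / ω₂).im) (h32 : 0 < (ω₃ / ω₂).im) (h31 : 0 < (ω₃ / ω₁).im)
    (hab : a + b = ω₁ + ω₂ + ω₃)
    (ha : modGRegular a ω₁ ω₂ ω₃) :
    modG a ω₁ ω₂ ω₃ * modG b ω₁ ω₂ ω₃ = 1 := by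
  have hω₁ : ω₁ ≠ 0 := by rintro rfl; simp at h31
  have hω₂ : ω₂ ≠ 0 := by rintro rfl; simp at h12
  obtain ⟨P, hP, hasProd_a⟩ := exists_hasProd_ellipticGammaFactor_ne_zero
    (x := cexp (2 * π * I * a / ω₂)) (y := cexp (2 * π * I * a / ω₁))
    (norm_exp_two_pi_I_mul_div_lt_one h12) (norm_exp_two_pi_I_mul_div_lt_one h32)
    (norm_exp_neg_two_pi_I_mul_div_lt_one h12) (norm_exp_two_pi_I_mul_div_lt_one h31)
    (by simpa only [modGRegular, exp_neg (2 * π * I * a / ω₂), exp_neg (2 * π * I * a / ω₁)]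
      using ha)
  have hy : cexp (2 * π * I * a / ω₁) * cexp (2 * π * I * b / ω₁) *
      cexp (-(2 * π * I * ω₂ / ω₁)) = cexp (2 * π * I * ω₃ / ω₁) := by
    rw [exp_two_pi_I_mul_div_mul_of_add_eq hω₁ (c := ω₂) (d := ω₃) (by linear_combination hab),
      mul_right_comm, ← Complex.exp_add, add_neg_cancel, Complex.exp_zero, one_mul]
  have reflection := ellipticGammaFactor_reflection
    (hx := exp_two_pi_I_mul_div_mul_of_add_eq hω₂ hab) (hy := hy)
    (exp_ne_zero _) (exp_ne_zero _) (exp_ne_zero _) (exp_ne_zero _)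
  rw [modG_eq_tprod, modG_eq_tprod, hasProd_a.tprod_eq, tprod_congr reflection,
    (hasProd_a.inv₀ hP).tprod_eq, mul_inv_cancel₀ hP]

theorem modG_reflection (ω₁ ω₂ ω₃ a b : ℂ)
    (h12 : 0 < (ω₁ / ω₂).im) (h32 : 0 < (ω₃ / ω₂).im) (h31 : 0 < (ω₃ / ω₁).im)
    (hab : a + b = ω₁ + ω₂ + ω₃)
    (ha : modGRegular a ω₁ ω₂ ω₃) (hb : modGRegular b ω₁ ω₂ ω₃) :
    modG a ω₁ ω₂ ω₃ * modG b ω₁ ω₂ ω₃ = 1 :=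
  modG_reflection_general ω₁ ω₂ ω₃ a b h12 h32 h31 hab ha
end
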